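/- arXiv:1910.14378 — 4 statements merged into one kernel-verified Lean document; each statement's English description precedes it below -/
import Mathlib

section
/- Quasi-optimality of the sketched sparse minimal residual approximation: let D ≥ 1 and τ ≥ 0. Suppose u_r ∈ W for some W ∈ L_r(D_K), that ‖r(u_r)‖_{U'}^Θ ≤ D · min_{W' ∈ L_r(D_K)} min_{w ∈ W'} ‖r(w)‖_{U'}^Θ + τ ‖b‖_{U'}^Θ, and that ζ_{r,K}^Θ > 0. Then ‖u − u_r‖_U ≤ (ι_{r,K}^Θ/ζ_{r,K}^Θ) · ( D · min_{W' ∈ L_r(D_K)} ‖u − P_{W'} u‖_U + τ ‖u‖_U ), where P_{W'} denotes the ⟨·,·⟩_U-orthogonal projection onto W'. -/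
open Matrix
open scoped ComplexOrder

noncomputable section

variable {𝕂 : Type*} [RCLike 𝕂]

/-- Canonical ℓ2 inner product on `𝕂^n` (conjugate-linear in the first argument). -/
def ip2 {n : ℕ} (x y : Fin n → 𝕂) : 𝕂 := star x ⬝ᵥ y

/-- Canonical ℓ2 norm on `𝕂^n`. -/
def norm2 {n : ℕ} (x : Fin n → 𝕂) : ℝ := Real.sqrt (RCLike.re (ip2 x x))

/-- Inner product `⟨x,y⟩_U := ⟨R x, y⟩` on `U = 𝕂^n`. -/
def ipU {n : ℕ} (R : Matrix (Fin n) (Fin n) 𝕂) (x y : Fin n → 𝕂) : 𝕂 := ip2 (R *ᵥ x) y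

/-- Norm `‖·‖_U` associated with `⟨·,·⟩_U`. -/
def normU {n : ℕ} (R : Matrix (Fin n) (Fin n) 𝕂) (x : Fin n → 𝕂) : ℝ :=
  Real.sqrt (RCLike.re (ipU R x x))

/-- Dual inner product `⟨x,y⟩_{U'} := ⟨x, R⁻¹ y⟩` on `U' = 𝕂^n`. -/
def ipDual {n : ℕ} (R : Matrix (Fin n) (Fin n) 𝕂) (x y : Fin n → 𝕂) : 𝕂 := ip2 x (R⁻¹ *ᵥ y)

/-- Dual norm `‖·‖_{U'}`. -/
def normDual {n : ℕ} (R : Matrix (Fin n) (Fin n) 𝕂) (x : Fin n → 𝕂) : ℝ :=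
  Real.sqrt (RCLike.re (ipDual R x x))

/-- Sketched semi-inner product `⟨x,y⟩_U^Θ := ⟨Θ x, Θ y⟩`. -/
def ipUS {n k : ℕ} (Θ : Matrix (Fin k) (Fin n) 𝕂) (x y : Fin n → 𝕂) : 𝕂 :=
  ip2 (Θ *ᵥ x) (Θ *ᵥ y)

/-- Sketched seminorm `‖·‖_U^Θ`. -/
def normUS {n k : ℕ} (Θ : Matrix (Fin k) (Fin n) 𝕂) (x : Fin n → 𝕂) : ℝ :=
  Real.sqrt (RCLike.re (ipUS Θ x x))

/-- Sketched dual seminorm `‖x‖_{U'}^Θ = ‖Θ R⁻¹ x‖`. -/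
def normDualS {n k : ℕ} (Θ : Matrix (Fin k) (Fin n) 𝕂) (R : Matrix (Fin n) (Fin n) 𝕂)
    (x : Fin n → 𝕂) : ℝ :=
  normUS Θ (R⁻¹ *ᵥ x)

/-- `Θ` is an `ε`-embedding for the subspace `V` of `U`. -/
def IsEmb {n k : ℕ} (R : Matrix (Fin n) (Fin n) 𝕂) (Θ : Matrix (Fin k) (Fin n) 𝕂)
    (V : Submodule 𝕂 (Fin n → 𝕂)) (ε : ℝ) : Prop :=
  ∀ x ∈ V, ∀ y ∈ V, ‖ipU R x y - ipUS Θ x y‖ ≤ ε * normU R x * normU R y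

/-- Distance (in `‖·‖_U`) from `v` to the subspace `W`; equals `‖v - P_W v‖_U`
where `P_W` is the `⟨·,·⟩_U`-orthogonal projection onto `W`. -/
def distU {n : ℕ} (R : Matrix (Fin n) (Fin n) 𝕂) (v : Fin n → 𝕂)
    (W : Submodule 𝕂 (Fin n → 𝕂)) : ℝ :=
  sInf {t | ∃ w ∈ W, t = normU R (v - w)}

/-- Set of ratios `num x / den x` over nonzero `x ∈ S`. -/
def ratioSet {n : ℕ} (S : Submodule 𝕂 (Fin n → 𝕂)) (num den : (Fin n → 𝕂) → ℝ) : Set ℝ :=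
  {t | ∃ x ∈ S, x ≠ 0 ∧ t = num x / den x}

/-- Library `L_r(D)` of all subspaces spanned by `r` vectors from the dictionary `D`. -/
def LrD {n : ℕ} (D : Finset (Fin n → 𝕂)) (r : ℕ) : Set (Submodule 𝕂 (Fin n → 𝕂)) :=
  {W | ∃ S : Finset (Fin n → 𝕂), S ⊆ D ∧ S.card = r ∧
    W = Submodule.span 𝕂 (S : Set (Fin n → 𝕂))}

/-- Set of ratios `num x / den x` over nonzero `x ∈ span{u} + W` with `W ∈ L_r(D)`. -/
def dictRatioSet {n : ℕ} (D : Finset (Fin n → 𝕂)) (r : ℕ) (u : Fin n → 𝕂)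
    (num den : (Fin n → 𝕂) → ℝ) : Set ℝ :=
  {t | ∃ W ∈ LrD D r, ∃ x ∈ Submodule.span 𝕂 {u} ⊔ W, x ≠ 0 ∧ t = num x / den x}

/-- The subspace `R_r(U_r) = span {R⁻¹ (b - A x) : x ∈ U_r}`. -/
def RrSub {n : ℕ} (R A : Matrix (Fin n) (Fin n) 𝕂) (b : Fin n → 𝕂)
    (Ur : Submodule 𝕂 (Fin n → 𝕂)) : Submodule 𝕂 (Fin n → 𝕂) :=
  Submodule.span 𝕂 {v | ∃ x ∈ Ur, v = R⁻¹ *ᵥ (b - A *ᵥ x)}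

/-- Dictionary-based `r`-width `σ_r(M; K)`. -/
def sigmaW {n : ℕ} (R : Matrix (Fin n) (Fin n) 𝕂) (M : Set (Fin n → 𝕂)) (r K : ℕ) : ℝ :=
  sInf {t | ∃ D : Finset (Fin n → 𝕂), D.card = K ∧
    t = sSup {s | ∃ v ∈ M, s = sInf {e | ∃ W ∈ LrD D r, e = distU R v W}}}

/-- Nonlinear Kolmogorov `r`-width `d_r(M; m)` with a library of `m` subspaces. -/
def dW {n : ℕ} (R : Matrix (Fin n) (Fin n) 𝕂) (M : Set (Fin n → 𝕂)) (r m : ℕ) : ℝ :=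
  sInf {t | ∃ L : Finset (Submodule 𝕂 (Fin n → 𝕂)), L.card = m ∧
    (∀ W ∈ L, Module.finrank 𝕂 ↥W ≤ r) ∧
    t = sSup {s | ∃ v ∈ M, s = sInf {e | ∃ W ∈ L, e = distU R v W}}}

/-- A posteriori estimator `ω̄` of the embedding constant of `Θ` for `V`,
computed from a second embedding `Θs`. -/
def omegaBar {n k ks : ℕ} (ε : ℝ) (Θ : Matrix (Fin k) (Fin n) 𝕂)
    (Θs : Matrix (Fin ks) (Fin n) 𝕂) (V : Submodule 𝕂 (Fin n → 𝕂)) : ℝ :=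
  max (1 - (1 - ε) * sInf {t | ∃ x ∈ V, x ≠ 0 ∧ t = (normUS Θ x / normUS Θs x) ^ 2})
      ((1 + ε) * sSup {t | ∃ x ∈ V, x ≠ 0 ∧ t = (normUS Θ x / normUS Θs x) ^ 2} - 1)


section Aux

open scoped MatrixOrder

variable {𝕂 : Type*} [RCLike 𝕂]

lemma norm2_eq_euclid {n : ℕ} (v : Fin n → 𝕂) :
    norm2 v = ‖(WithLp.equiv 2 (Fin n → 𝕂)).symm v‖ := by
  have h : ip2 v v = (inner 𝕂 ((WithLp.equiv 2 (Fin n → 𝕂)).symm v)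
      ((WithLp.equiv 2 (Fin n → 𝕂)).symm v) : 𝕂) :=
    by rw [ip2, dotProduct_comm]; rfl
  rw [norm2, h, inner_self_eq_norm_sq]
  exact Real.sqrt_sq (norm_nonneg _)

lemma ipU_self_eq {n : ℕ} {R : Matrix (Fin n) (Fin n) 𝕂} (hR : R.IsHermitian) (x : Fin n → 𝕂) :
    ipU R x x = star x ⬝ᵥ (R *ᵥ x) := by
  rw [ipU, ip2, star_mulVec, ← Matrix.dotProduct_mulVec, hR.eq]

lemma normU_eq_norm2 {n : ℕ} {R : Matrix (Fin n) (Fin n) 𝕂} (hR : R.PosDef) (x : Fin n → 𝕂) :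
    normU R x = norm2 (CFC.sqrt R *ᵥ x) := by
  have hSH : (CFC.sqrt R)ᴴ = CFC.sqrt R :=
    (CFC.sqrt_nonneg R).posSemidef.isHermitian
  have hSS : CFC.sqrt R * CFC.sqrt R = R := CFC.sqrt_mul_sqrt_self R hR.posSemidef.nonneg
  rw [normU, ipU_self_eq hR.isHermitian, norm2, ip2, star_mulVec,
    ← Matrix.dotProduct_mulVec, Matrix.mulVec_mulVec, hSH, hSS]

lemma normU_pos {n : ℕ} {R : Matrix (Fin n) (Fin n) 𝕂} (hR : R.PosDef) {x : Fin n → 𝕂}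
    (hx : x ≠ 0) : 0 < normU R x := by
  rw [normU, ipU_self_eq hR.isHermitian]
  exact Real.sqrt_pos.2 (hR.re_dotProduct_pos hx)

lemma normU_nonneg {n : ℕ} (R : Matrix (Fin n) (Fin n) 𝕂) (x : Fin n → 𝕂) :
    0 ≤ normU R x := Real.sqrt_nonneg _

lemma normDualS_nonneg {n k : ℕ} (Θ : Matrix (Fin k) (Fin n) 𝕂)
    (R : Matrix (Fin n) (Fin n) 𝕂) (x : Fin n → 𝕂) : 0 ≤ normDualS Θ R x :=
  Real.sqrt_nonneg _

lemma normDualS_zero {n k : ℕ} (Θ : Matrix (Fin k) (Fin n) 𝕂)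
    (R : Matrix (Fin n) (Fin n) 𝕂) : normDualS Θ R 0 = 0 := by
  simp [normDualS, normUS, ipUS, ip2, Matrix.mulVec_zero]

lemma normU_zero {n : ℕ} (R : Matrix (Fin n) (Fin n) 𝕂) : normU R (0 : Fin n → 𝕂) = 0 := by
  simp [normU, ipU, ip2, Matrix.mulVec_zero]

lemma normDualS_A_le {n k : ℕ} (R A : Matrix (Fin n) (Fin n) 𝕂) (hR : R.PosDef)
    (Θ : Matrix (Fin k) (Fin n) 𝕂) :
    ∃ C : ℝ, 0 ≤ C ∧ ∀ x : Fin n → 𝕂, normDualS Θ R (A *ᵥ x) ≤ C * normU R x := by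
  set S := CFC.sqrt R with hS
  have hSS : S * S = R := CFC.sqrt_mul_sqrt_self R hR.posSemidef.nonneg
  have hSdet : IsUnit S.det := by
    have h1 : IsUnit (S.det * S.det) := by
      rw [← Matrix.det_mul, hSS]
      exact hR.det_pos.ne'.isUnit
    exact isUnit_of_mul_isUnit_left h1
  set M := Θ * R⁻¹ * A with hM
  have hMx : ∀ x : Fin n → 𝕂, Θ *ᵥ (R⁻¹ *ᵥ (A *ᵥ x)) = (M * S⁻¹) *ᵥ (S *ᵥ x) := by
    intro x
    rw [Matrix.mulVec_mulVec, Matrix.mulVec_mulVec, Matrix.mulVec_mulVec,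
      Matrix.mul_assoc M, Matrix.nonsing_inv_mul _ hSdet, Matrix.mul_one, hM]
  set g := LinearMap.toContinuousLinearMap (Matrix.toEuclideanLin (M * S⁻¹)) with hg
  refine ⟨‖g‖, norm_nonneg _, fun x => ?_⟩
  have h1 : normDualS Θ R (A *ᵥ x)
      = ‖g ((WithLp.equiv 2 (Fin n → 𝕂)).symm (S *ᵥ x))‖ := by
    show norm2 (Θ *ᵥ (R⁻¹ *ᵥ (A *ᵥ x))) = _
    rw [hMx x, norm2_eq_euclid]
    congr 1
  have h2 : normU R x = ‖(WithLp.equiv 2 (Fin n → 𝕂)).symm (S *ᵥ x)‖ := by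
    rw [normU_eq_norm2 hR, norm2_eq_euclid]
  rw [h1, h2]
  exact g.le_opNorm _

end Aux

/-- Quasi-optimality of the sketched sparse minimal residual
approximation. -/
theorem sketched_sparse_minres_quasi_optimality {𝕂 : Type*} [RCLike 𝕂] {n k K r : ℕ}
    (R A : Matrix (Fin n) (Fin n) 𝕂) (hR : R.PosDef) (hA : IsUnit A.det)
    (Θ : Matrix (Fin k) (Fin n) 𝕂)
    (b u : Fin n → 𝕂) (hu : u = A⁻¹ *ᵥ b)
    (D : Finset (Fin n → 𝕂)) (hD : D.card = K)
    (Dc τ : ℝ) (hDc : 1 ≤ Dc) (hτ : 0 ≤ τ)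
    (ur : Fin n → 𝕂) (W : Submodule 𝕂 (Fin n → 𝕂)) (hW : W ∈ LrD D r) (hurW : ur ∈ W)
    (hres : normDualS Θ R (b - A *ᵥ ur)
      ≤ Dc * sInf {t | ∃ W' ∈ LrD D r, ∃ w ∈ W', t = normDualS Θ R (b - A *ᵥ w)}
        + τ * normDualS Θ R b)
    (ζΘ ιΘ : ℝ)
    (hζ : ζΘ = sInf (dictRatioSet D r u (fun x => normDualS Θ R (A *ᵥ x)) (normU R)))
    (hι : ιΘ = sSup (dictRatioSet D r u (fun x => normDualS Θ R (A *ᵥ x)) (normU R)))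
    (hζpos : 0 < ζΘ) :
    normU R (u - ur)
      ≤ (ιΘ / ζΘ) * (Dc * sInf {t | ∃ W' ∈ LrD D r, t = distU R u W'} + τ * normU R u) := by
  classical
  have hAu : A *ᵥ u = b := by
    rw [hu, Matrix.mulVec_mulVec, Matrix.mul_nonsing_inv _ hA, Matrix.one_mulVec]
  -- the ratio set
  have hratB : ∀ t ∈ dictRatioSet D r u (fun x => normDualS Θ R (A *ᵥ x)) (normU R), 0 ≤ t := by
    rintro t ⟨W', hW', x, hx, hx0, rfl⟩
    exact div_nonneg (normDualS_nonneg _ _ _) (normU_nonneg _ _)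
  have hBddB : BddBelow (dictRatioSet D r u (fun x => normDualS Θ R (A *ᵥ x)) (normU R)) :=
    ⟨0, fun t ht => hratB t ht⟩
  have hne : (dictRatioSet D r u (fun x => normDualS Θ R (A *ᵥ x)) (normU R)).Nonempty := by
    by_contra h
    rw [Set.not_nonempty_iff_eq_empty] at h
    rw [hζ, h, Real.sInf_empty] at hζpos
    exact lt_irrefl 0 hζpos
  obtain ⟨C, hC0, hCle⟩ := normDualS_A_le R A hR Θ
  have hBddA : BddAbove (dictRatioSet D r u (fun x => normDualS Θ R (A *ᵥ x)) (normU R)) := by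
    refine ⟨C, ?_⟩
    rintro t ⟨W', hW', x, hx, hx0, rfl⟩
    rw [div_le_iff₀ (normU_pos hR hx0)]
    exact hCle x
  have hι0 : 0 ≤ ιΘ := by
    obtain ⟨t, ht⟩ := hne
    exact le_trans (hratB t ht) (hι ▸ le_csSup hBddA ht)
  have hζle : ∀ x : Fin n → 𝕂, x ≠ 0 →
      (∃ W' ∈ LrD D r, x ∈ Submodule.span 𝕂 {u} ⊔ W') →
      ζΘ * normU R x ≤ normDualS Θ R (A *ᵥ x) := by
    rintro x hx0 ⟨W', hW', hxm⟩
    have hmem : (normDualS Θ R (A *ᵥ x) / normU R x)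
        ∈ dictRatioSet D r u (fun x => normDualS Θ R (A *ᵥ x)) (normU R) :=
      ⟨W', hW', x, hxm, hx0, rfl⟩
    have h := csInf_le hBddB hmem
    rw [← hζ] at h
    exact (le_div_iff₀ (normU_pos hR hx0)).1 h
  have hιge : ∀ x : Fin n → 𝕂,
      (∃ W' ∈ LrD D r, x ∈ Submodule.span 𝕂 {u} ⊔ W') →
      normDualS Θ R (A *ᵥ x) ≤ ιΘ * normU R x := by
    rintro x ⟨W', hW', hxm⟩
    by_cases hx0 : x = 0
    · subst hx0
      rw [Matrix.mulVec_zero, normDualS_zero, normU_zero, mul_zero]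
    · have hmem : (normDualS Θ R (A *ᵥ x) / normU R x)
          ∈ dictRatioSet D r u (fun x => normDualS Θ R (A *ᵥ x)) (normU R) :=
        ⟨W', hW', x, hxm, hx0, rfl⟩
      have h := le_csSup hBddA hmem
      rw [← hι] at h
      have := (div_le_iff₀ (normU_pos hR hx0)).1 h
      linarith [this]
  -- step A : for each W' in the library  sInf Sres ≤ ι * distU R u W'
  have hSresB : BddBelow {t | ∃ W' ∈ LrD D r, ∃ w ∈ W', t = normDualS Θ R (b - A *ᵥ w)} := by
    refine ⟨0, ?_⟩
    rintro t ⟨W', hW', w, hw, rfl⟩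
    exact normDualS_nonneg _ _ _
  have hstepA : ∀ W' ∈ LrD D r,
      sInf {t | ∃ W' ∈ LrD D r, ∃ w ∈ W', t = normDualS Θ R (b - A *ᵥ w)}
        ≤ ιΘ * distU R u W' := by
    intro W' hW'
    have hforall : ∀ w ∈ W',
        sInf {t | ∃ W' ∈ LrD D r, ∃ w ∈ W', t = normDualS Θ R (b - A *ᵥ w)}
          ≤ ιΘ * normU R (u - w) := by
      intro w hw
      have h1 : sInf {t | ∃ W' ∈ LrD D r, ∃ w ∈ W', t = normDualS Θ R (b - A *ᵥ w)}
          ≤ normDualS Θ R (b - A *ᵥ w) := csInf_le hSresB ⟨W', hW', w, hw, rfl⟩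
      have h2 : b - A *ᵥ w = A *ᵥ (u - w) := by rw [Matrix.mulVec_sub, hAu]
      have h3 := hιge (u - w) ⟨W', hW',
        Submodule.sub_mem _
          (Submodule.mem_sup_left (Submodule.mem_span_singleton_self u))
          (Submodule.mem_sup_right hw)⟩
      rw [h2] at h1
      linarith
    rcases eq_or_lt_of_le hι0 with hι0' | hιpos
    · have h0 := hforall 0 W'.zero_mem
      rw [← hι0', zero_mul] at h0 ⊢
      exact h0
    · have hdiv : sInf {t | ∃ W' ∈ LrD D r, ∃ w ∈ W', t = normDualS Θ R (b - A *ᵥ w)} / ιΘ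
          ≤ distU R u W' := by
        unfold distU
        refine le_csInf ⟨normU R (u - 0), 0, W'.zero_mem, rfl⟩ ?_
        rintro t ⟨w, hw, rfl⟩
        rw [div_le_iff₀ hιpos]
        have := hforall w hw
        linarith
      have := (div_le_iff₀ hιpos).1 hdiv
      linarith
  -- step B : sInf Sres ≤ ι * sInf of distances
  have hstepB : sInf {t | ∃ W' ∈ LrD D r, ∃ w ∈ W', t = normDualS Θ R (b - A *ᵥ w)}
      ≤ ιΘ * sInf {t | ∃ W' ∈ LrD D r, t = distU R u W'} := by
    rcases eq_or_lt_of_le hι0 with hι0' | hιpos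
    · have h0 := hstepA W hW
      rw [← hι0', zero_mul] at h0 ⊢
      exact h0
    · have hdiv : sInf {t | ∃ W' ∈ LrD D r, ∃ w ∈ W', t = normDualS Θ R (b - A *ᵥ w)} / ιΘ
          ≤ sInf {t | ∃ W' ∈ LrD D r, t = distU R u W'} := by
        refine le_csInf ⟨distU R u W, W, hW, rfl⟩ ?_
        rintro t ⟨W', hW', rfl⟩
        rw [div_le_iff₀ hιpos]
        have := hstepA W' hW'
        linarith
      have := (div_le_iff₀ hιpos).1 hdiv
      linarith
  -- the b term
  have hble : normDualS Θ R b ≤ ιΘ * normU R u := by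
    have := hιge u ⟨W, hW, Submodule.mem_sup_left (Submodule.mem_span_singleton_self u)⟩
    rwa [hAu] at this
  -- nonnegativity of the distance infimum
  have hdistnn : 0 ≤ sInf {t | ∃ W' ∈ LrD D r, t = distU R u W'} := by
    apply Real.sInf_nonneg
    rintro t ⟨W', hW', rfl⟩
    apply Real.sInf_nonneg
    rintro s ⟨w, hw, rfl⟩
    exact normU_nonneg _ _
  by_cases hue : u = ur
  · have hz : u - ur = 0 := by rw [hue, sub_self]
    rw [hz, normU_zero]
    apply mul_nonneg (div_nonneg hι0 hζpos.le)
    exact add_nonneg (mul_nonneg (by linarith) hdistnn)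
      (mul_nonneg hτ (normU_nonneg _ _))
  · have hx0 : u - ur ≠ 0 := sub_ne_zero.2 hue
    have hζb := hζle (u - ur) hx0 ⟨W, hW,
      Submodule.sub_mem _
        (Submodule.mem_sup_left (Submodule.mem_span_singleton_self u))
        (Submodule.mem_sup_right hurW)⟩
    have heq : A *ᵥ (u - ur) = b - A *ᵥ ur := by rw [Matrix.mulVec_sub, hAu]
    rw [heq] at hζb
    have hDc0 : (0:ℝ) ≤ Dc := by linarith
    have h2 := mul_le_mul_of_nonneg_left hstepB hDc0
    have h3 := mul_le_mul_of_nonneg_left hble hτ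
    have hring : ιΘ * (Dc * sInf {t | ∃ W' ∈ LrD D r, t = distU R u W'} + τ * normU R u)
        = Dc * (ιΘ * sInf {t | ∃ W' ∈ LrD D r, t = distU R u W'}) + τ * (ιΘ * normU R u) := by
      ring
    have hchain : ζΘ * normU R (u - ur)
        ≤ ιΘ * (Dc * sInf {t | ∃ W' ∈ LrD D r, t = distU R u W'} + τ * normU R u) := by
      rw [hring]
      linarith
    rw [div_mul_eq_mul_div, le_div_iff₀ hζpos]
    linarith

end
end

section
/- Preservation of the sparse minres quasi-optimality constants under sketching: for W ∈ L_r(D_K), let R_r(W) := span{R_U⁻¹(b − A x) : x ∈ W}. If 0 ≤ ε < 1 and Θ is an ε-embedding for R_r(W) for every W ∈ L_r(D_K), then √(1−ε)·ζ_{r,K} ≤ ζ_{r,K}^Θ ≤ √(1+ε)·ζ_{r,K} and √(1−ε)·ι_{r,K} ≤ ι_{r,K}^Θ ≤ √(1+ε)·ι_{r,K}. -/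
open Matrix
open scoped ComplexOrder

noncomputable section

variable {𝕂 : Type*} [RCLike 𝕂]

/-- Abstract comparison lemma for sInf/sSup of two nonneg sets linked pointwise. -/
lemma set_compare_aux {S T : Set ℝ} {a b : ℝ} (ha : 0 < a) (hb : 0 < b)
    (hS0 : ∀ s ∈ S, 0 ≤ s)
    (h1 : ∀ t ∈ T, ∃ s ∈ S, a * s ≤ t ∧ t ≤ b * s)
    (h2 : ∀ s ∈ S, ∃ t ∈ T, a * s ≤ t ∧ t ≤ b * s) :
    a * sInf S ≤ sInf T ∧ sInf T ≤ b * sInf S ∧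
      a * sSup S ≤ sSup T ∧ sSup T ≤ b * sSup S := by
  have hT0 : ∀ t ∈ T, 0 ≤ t := by
    intro t ht
    obtain ⟨s, hs, h, _⟩ := h1 t ht
    have := hS0 s hs; nlinarith
  have hSb : BddBelow S := ⟨0, hS0⟩
  have hTb : BddBelow T := ⟨0, hT0⟩
  rcases S.eq_empty_or_nonempty with hSe | hSne
  · have hTe : T = ∅ := by
      rcases T.eq_empty_or_nonempty with h | ⟨t, ht⟩
      · exact h
      · obtain ⟨s, hs, _⟩ := h1 t ht
        simp [hSe] at hs
    simp [hSe, hTe, Real.sInf_empty, Real.sSup_empty]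
  · obtain ⟨s₀, hs₀⟩ := hSne
    obtain ⟨t₀, ht₀, _⟩ := h2 s₀ hs₀
    have hTne : T.Nonempty := ⟨t₀, ht₀⟩
    refine ⟨?_, ?_, ?_, ?_⟩
    · refine le_csInf hTne ?_
      intro t ht
      obtain ⟨s, hs, h, _⟩ := h1 t ht
      exact le_trans (by nlinarith [csInf_le hSb hs]) h
    · rw [← div_le_iff₀' hb]
      refine le_csInf ⟨s₀, hs₀⟩ ?_
      intro s hs
      obtain ⟨t, ht, _, htb⟩ := h2 s hs
      rw [div_le_iff₀' hb]
      exact le_trans (csInf_le hTb ht) htb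
    · by_cases hTa : BddAbove T
      · rw [← le_div_iff₀' ha]
        refine csSup_le ⟨s₀, hs₀⟩ ?_
        intro s hs
        obtain ⟨t, ht, hta, _⟩ := h2 s hs
        rw [le_div_iff₀' ha]
        exact le_trans hta (le_csSup hTa ht)
      · have hSa : ¬ BddAbove S := by
          intro ⟨M, hM⟩
          refine hTa ⟨b * M, ?_⟩
          intro t ht
          obtain ⟨s, hs, _, htb⟩ := h1 t ht
          exact le_trans htb (by nlinarith [hM hs])
        rw [Real.sSup_of_not_bddAbove hTa, Real.sSup_of_not_bddAbove hSa]
        simp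
    · by_cases hSa : BddAbove S
      · refine csSup_le hTne ?_
        intro t ht
        obtain ⟨s, hs, _, htb⟩ := h1 t ht
        exact le_trans htb (by nlinarith [le_csSup hSa hs])
      · have hTa : ¬ BddAbove T := by
          intro ⟨M, hM⟩
          refine hSa ⟨M / a, ?_⟩
          intro s hs
          obtain ⟨t, ht, hta, _⟩ := h2 s hs
          rw [le_div_iff₀ ha]
          exact le_trans (by linarith) (hM ht)
        rw [Real.sSup_of_not_bddAbove hTa, Real.sSup_of_not_bddAbove hSa]
        simp

/-- Pointwise key lemma: sketched dual norm of residual-type vectors is comparable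
to the true dual norm. -/
lemma key_aux {n k : ℕ} (R A : Matrix (Fin n) (Fin n) 𝕂) (hR : R.PosDef) (hA : IsUnit A.det)
    (Θ : Matrix (Fin k) (Fin n) 𝕂) (b : Fin n → 𝕂) (ε : ℝ) (hε0 : 0 ≤ ε) (hε1 : ε < 1)
    (W : Submodule 𝕂 (Fin n → 𝕂)) (hW : IsEmb R Θ (RrSub R A b W) ε)
    (x : Fin n → 𝕂) (hx : x ∈ Submodule.span 𝕂 {A⁻¹ *ᵥ b} ⊔ W) :
    Real.sqrt (1 - ε) * normDual R (A *ᵥ x) ≤ normDualS Θ R (A *ᵥ x) ∧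
      normDualS Θ R (A *ᵥ x) ≤ Real.sqrt (1 + ε) * normDual R (A *ᵥ x) := by
  set v : Fin n → 𝕂 := A *ᵥ x with hv
  set z : Fin n → 𝕂 := R⁻¹ *ᵥ v with hzdef
  have hz : z ∈ RrSub R A b W := by
    obtain ⟨y, hy, w, hw, hxyw⟩ := Submodule.mem_sup.mp hx
    obtain ⟨c, hc⟩ := Submodule.mem_span_singleton.mp hy
    have hb : R⁻¹ *ᵥ b ∈ RrSub R A b W := by
      apply Submodule.subset_span
      exact ⟨0, W.zero_mem, by simp⟩
    have hAw : R⁻¹ *ᵥ (A *ᵥ w) ∈ RrSub R A b W := by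
      have h1 : R⁻¹ *ᵥ (b - A *ᵥ w) ∈ RrSub R A b W :=
        Submodule.subset_span ⟨w, hw, rfl⟩
      have : R⁻¹ *ᵥ (A *ᵥ w) = R⁻¹ *ᵥ b - R⁻¹ *ᵥ (b - A *ᵥ w) := by
        rw [← mulVec_sub, sub_sub_cancel]
      rw [this]
      exact Submodule.sub_mem _ hb h1
    have hAu : A *ᵥ (A⁻¹ *ᵥ b) = b := by
      rw [mulVec_mulVec, Matrix.mul_nonsing_inv A hA, one_mulVec]
    have : z = c • (R⁻¹ *ᵥ b) + R⁻¹ *ᵥ (A *ᵥ w) := by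
      rw [hzdef, hv, ← hxyw, ← hc, mulVec_add, mulVec_smul, hAu, mulVec_add, mulVec_smul]
    rw [this]
    exact Submodule.add_mem _ (Submodule.smul_mem _ _ hb) hAw
  have hRdet : IsUnit R.det := hR.det_pos.ne'.isUnit
  have hRz : R *ᵥ z = v := by
    rw [hzdef, mulVec_mulVec, Matrix.mul_nonsing_inv R hRdet, one_mulVec]
  set p : ℝ := RCLike.re (ipU R z z) with hp
  set q : ℝ := RCLike.re (ipUS Θ z z) with hq
  have hp0 : 0 ≤ p := by
    have : ipU R z z = star z ⬝ᵥ (R *ᵥ z) := by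
      rw [ipU, ip2, star_mulVec, ← dotProduct_mulVec, hR.isHermitian.eq]
    rw [hp, this]
    exact hR.posSemidef.re_dotProduct_nonneg z
  have hq0 : 0 ≤ q := by
    have : (0 : 𝕂) ≤ ipUS Θ z z := by
      rw [ipUS, ip2]; exact dotProduct_star_self_nonneg _
    exact (RCLike.nonneg_iff.mp this).1
  have hnd : normDual R v = Real.sqrt p := by
    rw [normDual, hp]
    congr 2
    rw [ipDual, ipU, ip2, ip2, hRz, hzdef]
  have hnds : normDualS Θ R v = Real.sqrt q := rfl
  have hbound := hW z hz z hz
  have habs : |p - q| ≤ ε * p := by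
    have h1 : |RCLike.re ((ipU R z z : 𝕂) - ipUS Θ z z)| ≤ ε * normU R z * normU R z :=
      (RCLike.abs_re_le_norm _).trans hbound
    rw [map_sub, ← hp, ← hq, normU, ← hp, mul_assoc, Real.mul_self_sqrt hp0] at h1
    exact h1
  have hlow : (1 - ε) * p ≤ q := by
    rcases abs_le.mp habs with ⟨h1, h2⟩; nlinarith
  have hhigh : q ≤ (1 + ε) * p := by
    rcases abs_le.mp habs with ⟨h1, h2⟩; nlinarith
  constructor
  · rw [hnd, hnds, ← Real.sqrt_mul (by linarith)]
    exact Real.sqrt_le_sqrt hlow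
  · rw [hnd, hnds, ← Real.sqrt_mul (by linarith)]
    exact Real.sqrt_le_sqrt hhigh

lemma div_le_div_of_nonneg_right' {a b c : ℝ} (h : a ≤ b) (hc : 0 < c) : a / c ≤ b / c := by
  gcongr

/-- Preservation of the sparse minres quasi-optimality constants
under sketching. -/
theorem sketched_sparse_minres_constants_preservation {𝕂 : Type*} [RCLike 𝕂] {n k K r : ℕ}
    (R A : Matrix (Fin n) (Fin n) 𝕂) (hR : R.PosDef) (hA : IsUnit A.det)
    (Θ : Matrix (Fin k) (Fin n) 𝕂)
    (b u : Fin n → 𝕂) (hu : u = A⁻¹ *ᵥ b)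
    (D : Finset (Fin n → 𝕂)) (hD : D.card = K)
    (ε : ℝ) (hε0 : 0 ≤ ε) (hε1 : ε < 1)
    (hemb : ∀ W ∈ LrD D r, IsEmb R Θ (RrSub R A b W) ε)
    (ζ ι ζΘ ιΘ : ℝ)
    (hζ : ζ = sInf (dictRatioSet D r u (fun x => normDual R (A *ᵥ x)) (normU R)))
    (hι : ι = sSup (dictRatioSet D r u (fun x => normDual R (A *ᵥ x)) (normU R)))
    (hζΘ : ζΘ = sInf (dictRatioSet D r u (fun x => normDualS Θ R (A *ᵥ x)) (normU R)))
    (hιΘ : ιΘ = sSup (dictRatioSet D r u (fun x => normDualS Θ R (A *ᵥ x)) (normU R))) :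
    Real.sqrt (1 - ε) * ζ ≤ ζΘ ∧ ζΘ ≤ Real.sqrt (1 + ε) * ζ ∧
      Real.sqrt (1 - ε) * ι ≤ ιΘ ∧ ιΘ ≤ Real.sqrt (1 + ε) * ι := by
  subst hu hζ hι hζΘ hιΘ
  have ha : (0:ℝ) < Real.sqrt (1 - ε) := Real.sqrt_pos.mpr (by linarith)
  have hb : (0:ℝ) < Real.sqrt (1 + ε) := Real.sqrt_pos.mpr (by linarith)
  set S := dictRatioSet D r (A⁻¹ *ᵥ b) (fun x => normDual R (A *ᵥ x)) (normU R) with hSdef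
  set T := dictRatioSet D r (A⁻¹ *ᵥ b) (fun x => normDualS Θ R (A *ᵥ x)) (normU R) with hTdef
  have hS0 : ∀ s ∈ S, 0 ≤ s := by
    rintro s ⟨W, hW, x, hx, hx0, rfl⟩
    exact div_nonneg (Real.sqrt_nonneg _) (Real.sqrt_nonneg _)
  have hratio : ∀ W ∈ LrD D r, ∀ x ∈ Submodule.span 𝕂 {A⁻¹ *ᵥ b} ⊔ W,
      Real.sqrt (1 - ε) * (normDual R (A *ᵥ x) / normU R x) ≤
        normDualS Θ R (A *ᵥ x) / normU R x ∧
      normDualS Θ R (A *ᵥ x) / normU R x ≤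
        Real.sqrt (1 + ε) * (normDual R (A *ᵥ x) / normU R x) := by
    intro W hW x hx
    obtain ⟨hl, hh⟩ := key_aux R A hR hA Θ b ε hε0 hε1 W (hemb W hW) x hx
    have hd : (0:ℝ) ≤ normU R x := Real.sqrt_nonneg _
    rcases eq_or_lt_of_le hd with h | h
    · rw [← h]
      simp
    · constructor
      · rw [← mul_div_assoc]
        exact div_le_div_of_nonneg_right' hl h
      · rw [← mul_div_assoc]
        exact div_le_div_of_nonneg_right' hh h
  have h1 : ∀ t ∈ T, ∃ s ∈ S, Real.sqrt (1 - ε) * s ≤ t ∧ t ≤ Real.sqrt (1 + ε) * s := by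
    rintro t ⟨W, hW, x, hx, hx0, rfl⟩
    exact ⟨_, ⟨W, hW, x, hx, hx0, rfl⟩, (hratio W hW x hx).1, (hratio W hW x hx).2⟩
  have h2 : ∀ s ∈ S, ∃ t ∈ T, Real.sqrt (1 - ε) * s ≤ t ∧ t ≤ Real.sqrt (1 + ε) * s := by
    rintro s ⟨W, hW, x, hx, hx0, rfl⟩
    exact ⟨_, ⟨W, hW, x, hx, hx0, rfl⟩, (hratio W hW x hx).1, (hratio W hW x hx).2⟩
  obtain ⟨c1, c2, c3, c4⟩ := set_compare_aux ha hb hS0 h1 h2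
  exact ⟨c1, c2, c3, c4⟩


end
end

section
/- Effectivity of the a posteriori bound for the embedding constant: let V ⊆ U be a nonzero subspace and Θ ∈ 𝕂^{k×n} a matrix, and let ω ≥ 0 be such that Θ is an ω-embedding for V. Let ε* ≥ 0 and let Θ* ∈ 𝕂^{k*×n} be a matrix that is an ω*-embedding for V with 0 ≤ ω* < 1 (so that ‖x‖_U^{Θ*} > 0 for every nonzero x ∈ V). Then the quantity ω̄ := max{ 1 − (1−ε*)·min_{x ∈ V, x ≠ 0} (‖x‖_U^Θ/‖x‖_U^{Θ*})², (1+ε*)·max_{x ∈ V, x ≠ 0} (‖x‖_U^Θ/‖x‖_U^{Θ*})² − 1 } satisfies ω̄ ≤ (1+ε*)(1+ω)/(1−ω*) − 1. -/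
open Matrix
open scoped ComplexOrder

noncomputable section

variable {𝕂 : Type*} [RCLike 𝕂]

/-- Auxiliary elementwise bounds for the ratio `(‖x‖_U^Θ / ‖x‖_U^{Θs})²`. -/
private lemma ratio_sq_bounds {𝕂 : Type*} [RCLike 𝕂] {n k ks : ℕ}
    (R : Matrix (Fin n) (Fin n) 𝕂) (hR : R.PosDef)
    (V : Submodule 𝕂 (Fin n → 𝕂))
    (Θ : Matrix (Fin k) (Fin n) 𝕂)
    (ω : ℝ) (hω : 0 ≤ ω) (hembω : IsEmb R Θ V ω)
    (Θs : Matrix (Fin ks) (Fin n) 𝕂)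
    (ωs : ℝ) (hωs0 : 0 ≤ ωs) (hωs1 : ωs < 1) (hembωs : IsEmb R Θs V ωs)
    (x : Fin n → 𝕂) (hxV : x ∈ V) (hx0 : x ≠ 0) :
    (1 - ω) / (1 + ωs) ≤ (normUS Θ x / normUS Θs x) ^ 2 ∧
      (normUS Θ x / normUS Θs x) ^ 2 ≤ (1 + ω) / (1 - ωs) := by
  have hωs' : 0 < 1 - ωs := by linarith
  have hωs'' : 0 < 1 + ωs := by linarith
  set A : ℝ := RCLike.re (ipU R x x) with hAdef
  set B : ℝ := RCLike.re (ipUS Θ x x) with hBdef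
  set B' : ℝ := RCLike.re (ipUS Θs x x) with hB'def
  have hA : 0 < A := by
    have h1 := hR.dotProduct_mulVec_pos hx0
    have h2 : ipU R x x = star x ⬝ᵥ R *ᵥ x := by
      rw [ipU, ip2, Matrix.star_mulVec, ← Matrix.dotProduct_mulVec, hR.1.eq]
    rw [hAdef, h2]
    exact (RCLike.pos_iff.mp h1).1
  have hB : 0 ≤ B := by
    have : (0 : 𝕂) ≤ ipUS Θ x x := by
      rw [ipUS, ip2]; exact dotProduct_star_self_nonneg _
    exact (RCLike.nonneg_iff.mp this).1
  have hBb' : 0 ≤ RCLike.re (ipUS Θs x x) := by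
    have : (0 : 𝕂) ≤ ipUS Θs x x := by
      rw [ipUS, ip2]; exact dotProduct_star_self_nonneg _
    exact (RCLike.nonneg_iff.mp this).1
  have hnormU : normU R x * normU R x = A :=
    Real.mul_self_sqrt hA.le
  have hbnd : |A - B| ≤ ω * A := by
    calc |A - B| = |RCLike.re (ipU R x x - ipUS Θ x x)| := by rw [map_sub]
      _ ≤ ‖ipU R x x - ipUS Θ x x‖ := RCLike.abs_re_le_norm _
      _ ≤ ω * normU R x * normU R x := hembω x hxV x hxV
      _ = ω * A := by rw [mul_assoc, hnormU]
  have hbnd' : |A - B'| ≤ ωs * A := by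
    calc |A - B'| = |RCLike.re (ipU R x x - ipUS Θs x x)| := by rw [map_sub]
      _ ≤ ‖ipU R x x - ipUS Θs x x‖ := RCLike.abs_re_le_norm _
      _ ≤ ωs * normU R x * normU R x := hembωs x hxV x hxV
      _ = ωs * A := by rw [mul_assoc, hnormU]
  rw [abs_le] at hbnd hbnd'
  have hBle : B ≤ (1 + ω) * A := by nlinarith [hbnd.1]
  have hBge : (1 - ω) * A ≤ B := by nlinarith [hbnd.2]
  have hB'ge : (1 - ωs) * A ≤ B' := by nlinarith [hbnd'.2]
  have hB'le : B' ≤ (1 + ωs) * A := by nlinarith [hbnd'.1]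
  have hB'pos : 0 < B' := lt_of_lt_of_le (by nlinarith) hB'ge
  have hratio : (normUS Θ x / normUS Θs x) ^ 2 = B / B' := by
    rw [div_pow, normUS, normUS, Real.sq_sqrt hB, Real.sq_sqrt hB'pos.le]
  rw [hratio]
  constructor
  · rw [div_le_div_iff₀ hωs'' hB'pos]
    rcases le_or_gt (1 - ω) 0 with h | h
    · nlinarith
    · nlinarith
  · rw [div_le_div_iff₀ hB'pos hωs']
    nlinarith

/-- Effectivity of the a posteriori bound for the embedding
constant. -/
theorem embedding_constant_aposteriori_bound_effectivity
    {𝕂 : Type*} [RCLike 𝕂] {n k ks : ℕ}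
    (R : Matrix (Fin n) (Fin n) 𝕂) (hR : R.PosDef)
    (V : Submodule 𝕂 (Fin n → 𝕂)) (hV : V ≠ ⊥)
    (Θ : Matrix (Fin k) (Fin n) 𝕂)
    (ω : ℝ) (hω : 0 ≤ ω) (hembω : IsEmb R Θ V ω)
    (εs : ℝ) (hεs : 0 ≤ εs)
    (Θs : Matrix (Fin ks) (Fin n) 𝕂)
    (ωs : ℝ) (hωs0 : 0 ≤ ωs) (hωs1 : ωs < 1) (hembωs : IsEmb R Θs V ωs) :
    omegaBar εs Θ Θs V ≤ (1 + εs) * (1 + ω) / (1 - ωs) - 1 := by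
  have hωs' : 0 < 1 - ωs := by linarith
  have hωs'' : 0 < 1 + ωs := by linarith
  set T : Set ℝ := {t | ∃ x ∈ V, x ≠ 0 ∧ t = (normUS Θ x / normUS Θs x) ^ 2} with hT
  set c : ℝ := (1 + ω) / (1 - ωs) with hc
  set L : ℝ := (1 - ω) / (1 + ωs) with hL
  have helem : ∀ t ∈ T, L ≤ t ∧ t ≤ c := by
    rintro t ⟨x, hxV, hx0, rfl⟩
    exact ratio_sq_bounds R hR V Θ ω hω hembω Θs ωs hωs0 hωs1 hembωs x hxV hx0
  obtain ⟨x0, hx0V, hx0⟩ := (Submodule.ne_bot_iff V).mp hV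
  have hTne : T.Nonempty := ⟨_, x0, hx0V, hx0, rfl⟩
  have hcnn : 0 ≤ c := div_nonneg (by linarith) hωs'.le
  have hsup : sSup T ≤ c := Real.sSup_le (fun t ht => (helem t ht).2) hcnn
  have hinf1 : L ≤ sInf T := le_csInf hTne (fun t ht => (helem t ht).1)
  have hinf2 : sInf T ≤ c := by
    obtain ⟨t0, ht0⟩ := hTne
    exact le_trans (csInf_le ⟨L, fun t ht => (helem t ht).1⟩ ht0) (helem t0 ht0).2
  have hgoal : (1 + εs) * (1 + ω) / (1 - ωs) - 1 = (1 + εs) * c - 1 := by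
    rw [hc]; ring
  rw [omegaBar, ← hT, hgoal]
  clear helem hembω hembωs hgoal hR hTne
  clear_value T c L
  clear hT
  set I : ℝ := sInf T with hI
  set S : ℝ := sSup T with hS
  clear_value I S
  clear hI hS T
  apply max_le
  · -- first branch
    rcases le_or_gt εs 1 with hε1 | hε1
    · have h1 : 1 - (1 - εs) * I ≤ 1 - (1 - εs) * L := by nlinarith
      refine h1.trans ?_
      rcases le_or_gt ω 1 with hω1 | hω1
      · have hLge : (1 - ω) * (1 - ωs) ≤ L := by
          rw [hL, le_div_iff₀ hωs'']
          nlinarith [mul_nonneg (by linarith : (0:ℝ) ≤ 1 - ω) (mul_self_nonneg ωs)]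
        have hcge : (1 + ω) * (1 + ωs) ≤ c := by
          rw [hc, le_div_iff₀ hωs']
          nlinarith [mul_nonneg (by linarith : (0:ℝ) ≤ 1 + ω) (mul_self_nonneg ωs)]
        have e1 : (1 - εs) * ((1 - ω) * (1 - ωs)) ≤ (1 - εs) * L :=
          mul_le_mul_of_nonneg_left hLge (by linarith)
        have e2 : (1 + εs) * ((1 + ω) * (1 + ωs)) ≤ (1 + εs) * c :=
          mul_le_mul_of_nonneg_left hcge (by linarith)
        nlinarith [mul_nonneg hεs hω, mul_nonneg hωs0 hω, mul_nonneg hωs0 hεs]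
      · have hLge : (1 - ω) ≤ L := by
          rw [hL, le_div_iff₀ hωs'']
          nlinarith [mul_nonneg hωs0 (by linarith : (0:ℝ) ≤ ω - 1)]
        have hcge : (1 + ω) ≤ c := by
          rw [hc, le_div_iff₀ hωs']
          nlinarith [mul_nonneg hωs0 (by linarith : (0:ℝ) ≤ 1 + ω)]
        have e1 : (1 - εs) * (1 - ω) ≤ (1 - εs) * L :=
          mul_le_mul_of_nonneg_left hLge (by linarith)
        have e2 : (1 + εs) * (1 + ω) ≤ (1 + εs) * c :=
          mul_le_mul_of_nonneg_left hcge (by linarith)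
        nlinarith [mul_nonneg hεs hω]
    · have hcge : (1 : ℝ) ≤ c := by
        rw [hc, le_div_iff₀ hωs']; nlinarith
      nlinarith [mul_le_mul_of_nonneg_left hinf2 (by linarith : (0:ℝ) ≤ εs - 1)]
  · have : (1 + εs) * S ≤ (1 + εs) * c :=
      mul_le_mul_of_nonneg_left hsup (by linarith)
    linarith

end
end

section
/- Deterministic error bound for the sketched estimation of a linear quantity of interest: let ε ≥ 0, let l ∈ U' and u_r, w_p ∈ U, and suppose Θ ∈ 𝕂^{k×n} is an ε-embedding for a subspace of U containing the vectors R_U⁻¹ l, u_r and w_p. Define s_r := ⟨l, u_r⟩ and s*_r := ⟨l, w_p⟩ + ⟨R_U⁻¹ l, u_r − w_p⟩_U^Θ. Then |s_r − s*_r| ≤ ε ‖l‖_{U'} ‖u_r − w_p‖_U. -/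
open Matrix
open scoped ComplexOrder

noncomputable section

variable {𝕂 : Type*} [RCLike 𝕂]

/-- Deterministic error bound for the sketched estimation of a
linear quantity of interest. -/
theorem sketched_quantity_of_interest_deterministic_bound
    {𝕂 : Type*} [RCLike 𝕂] {n k : ℕ}
    (R : Matrix (Fin n) (Fin n) 𝕂) (hR : R.PosDef)
    (ε : ℝ) (hε : 0 ≤ ε)
    (lv ur wp : Fin n → 𝕂)
    (V : Submodule 𝕂 (Fin n → 𝕂))
    (hlV : R⁻¹ *ᵥ lv ∈ V) (hurV : ur ∈ V) (hwpV : wp ∈ V)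
    (Θ : Matrix (Fin k) (Fin n) 𝕂) (hemb : IsEmb R Θ V ε) :
    ‖ip2 lv ur - (ip2 lv wp + ipUS Θ (R⁻¹ *ᵥ lv) (ur - wp))‖
      ≤ ε * normDual R lv * normU R (ur - wp) := by

  have hinv : R *ᵥ (R⁻¹ *ᵥ lv) = lv := by
    rw [Matrix.mulVec_mulVec, Matrix.mul_nonsing_inv _ ((Matrix.isUnit_iff_isUnit_det _).mp hR.isUnit), Matrix.one_mulVec]
  have hdiff : ur - wp ∈ V := Submodule.sub_mem V hurV hwpV
  have key := hemb _ hlV _ hdiff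
  have h1 : ipU R (R⁻¹ *ᵥ lv) (ur - wp) = ip2 lv ur - ip2 lv wp := by
    simp [ipU, hinv, ip2, dotProduct_sub]
  have h2 : normU R (R⁻¹ *ᵥ lv) = normDual R lv := by
    simp [normU, normDual, ipU, ipDual, hinv]
  rw [h1, h2] at key
  convert key using 2
  ring


end
end
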